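/- Let K be a field and A a finite dimensional K-algebra, and identify stability functions on mod A with vectors θ ∈ ℝ^n via θ(M) = ⟨θ, dim M⟩. For every M ∈ mod A, the set {θ ∈ ℝ^n : M ∈ T_θ} is open in ℝ^n (with the standard topology). -/
import Mathlib


namespace TorsPaper

variable (A : Type) [Ring A]

/-- `N` is (isomorphic to) a factor module of `M`. -/
def IsQuotientOf (N M : ModuleCat.{0} A) : Prop :=
  ∃ f : M →ₗ[A] N, Function.Surjective f

/-- `L` is (isomorphic to) a submodule of `M`. -/
def IsSubmoduleOf (L M : ModuleCat.{0} A) : Prop :=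
  ∃ f : L →ₗ[A] M, Function.Injective f

/-- `M` is a nonzero module. -/
def Nonzero (M : ModuleCat.{0} A) : Prop := ∃ x : M, x ≠ 0

/-- A torsion class in `mod A`: a class of finitely generated modules, containing the zero
modules, closed under isomorphisms (which follows from `quot`), factor modules and
extensions. -/
structure IsTorsionClass (T : ModuleCat.{0} A → Prop) : Prop where
  fin : ∀ M, T M → Module.Finite A M
  zero : ∀ M : ModuleCat.{0} A, (∀ x : M, x = 0) → T M
  quot : ∀ M N : ModuleCat.{0} A, T M → Module.Finite A N → IsQuotientOf A N M → T N
  ext : ∀ M : ModuleCat.{0} A, Module.Finite A M → ∀ N : Submodule A M,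
    T (ModuleCat.of A N) → T (ModuleCat.of A (M ⧸ N)) → T M

/-- A torsion-free class in `mod A`. -/
structure IsTorsionFreeClass (F : ModuleCat.{0} A → Prop) : Prop where
  fin : ∀ M, F M → Module.Finite A M
  zero : ∀ M : ModuleCat.{0} A, (∀ x : M, x = 0) → F M
  sub : ∀ M N : ModuleCat.{0} A, F M → Module.Finite A N → IsSubmoduleOf A N M → F N
  ext : ∀ M : ModuleCat.{0} A, Module.Finite A M → ∀ N : Submodule A M,
    F (ModuleCat.of A N) → F (ModuleCat.of A (M ⧸ N)) → F M

/-- The right Hom-perpendicular class `T^⊥` inside `mod A`. -/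
def rightPerp (T : ModuleCat.{0} A → Prop) : ModuleCat.{0} A → Prop :=
  fun X => Module.Finite A X ∧ ∀ M : ModuleCat.{0} A, T M → ∀ f : M →ₗ[A] X, f = 0

/-- The smallest torsion class containing a class `S` of modules. -/
def torsClosure (S : ModuleCat.{0} A → Prop) : ModuleCat.{0} A → Prop :=
  fun X => ∀ T : ModuleCat.{0} A → Prop, IsTorsionClass A T → (∀ Y, S Y → T Y) → T X

/-- The smallest torsion-free class containing a class `S` of modules. -/
def torfClosure (S : ModuleCat.{0} A → Prop) : ModuleCat.{0} A → Prop :=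
  fun X => ∀ F : ModuleCat.{0} A → Prop, IsTorsionFreeClass A F → (∀ Y, S Y → F Y) → F X

/-- A torsion class is compact if it is the smallest torsion class containing a single
module `M`. -/
def IsCompactTors (T : ModuleCat.{0} A → Prop) : Prop :=
  ∃ M : ModuleCat.{0} A, Module.Finite A M ∧ T = torsClosure A (fun X => X = M)

/-- A torsion class is cocompact if `T^⊥` is the smallest torsion-free class containing a
single module `N`. -/
def IsCocompactTors (T : ModuleCat.{0} A → Prop) : Prop :=
  ∃ N : ModuleCat.{0} A, Module.Finite A N ∧ rightPerp A T = torfClosure A (fun X => X = N)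

/-- A torsion class is bicompact if it is both compact and cocompact. -/
def IsBicompactTors (T : ModuleCat.{0} A → Prop) : Prop :=
  IsCompactTors A T ∧ IsCocompactTors A T

/-- A class `C` of modules is functorially finite in `mod A` if every finitely generated
module has a left `C`-approximation and a right `C`-approximation. -/
def FunctoriallyFinite (C : ModuleCat.{0} A → Prop) : Prop :=
  (∀ M : ModuleCat.{0} A, Module.Finite A M →
    ∃ (X : ModuleCat.{0} A) (f : M →ₗ[A] X), C X ∧
      ∀ Y : ModuleCat.{0} A, C Y → ∀ g : M →ₗ[A] Y, ∃ h : X →ₗ[A] Y, h.comp f = g) ∧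
  (∀ M : ModuleCat.{0} A, Module.Finite A M →
    ∃ (X : ModuleCat.{0} A) (f : X →ₗ[A] M), C X ∧
      ∀ Y : ModuleCat.{0} A, C Y → ∀ g : Y →ₗ[A] M, ∃ h : Y →ₗ[A] X, f.comp h = g)

/-- A stability function: a real-valued function on `mod A` which is additive on short
exact sequences. -/
def IsStability (θ : ModuleCat.{0} A → ℝ) : Prop :=
  ∀ L M N : ModuleCat.{0} A, Module.Finite A L → Module.Finite A M → Module.Finite A N →
    ∀ (f : L →ₗ[A] M) (g : M →ₗ[A] N), Function.Injective f → Function.Surjective g →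
      LinearMap.range f = LinearMap.ker g → θ M = θ L + θ N

/-- The semistable torsion class `T_θ`. -/
def tTheta (θ : ModuleCat.{0} A → ℝ) : ModuleCat.{0} A → Prop :=
  fun M => Module.Finite A M ∧ ∀ N : ModuleCat.{0} A, Module.Finite A N →
    IsQuotientOf A N M → Nonzero A N → 0 < θ N

/-- The semistable torsion class `\bar T_θ`. -/
def tThetaBar (θ : ModuleCat.{0} A → ℝ) : ModuleCat.{0} A → Prop :=
  fun M => Module.Finite A M ∧ ∀ N : ModuleCat.{0} A, Module.Finite A N →
    IsQuotientOf A N M → 0 ≤ θ N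

/-- The semistable torsion-free class `F_θ`. -/
def fTheta (θ : ModuleCat.{0} A → ℝ) : ModuleCat.{0} A → Prop :=
  fun M => Module.Finite A M ∧ ∀ L : ModuleCat.{0} A, Module.Finite A L →
    IsSubmoduleOf A L M → Nonzero A L → θ L < 0

/-- The semistable torsion-free class `\bar F_θ`. -/
def fThetaBar (θ : ModuleCat.{0} A → ℝ) : ModuleCat.{0} A → Prop :=
  fun M => Module.Finite A M ∧ ∀ L : ModuleCat.{0} A, Module.Finite A L →
    IsSubmoduleOf A L M → θ L ≤ 0

/-- An integer-valued function on `mod A` additive on short exact sequences; these are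
exactly the group homomorphisms `K0(mod A) → ℤ`. -/
def IsAdditiveZ (φ : ModuleCat.{0} A → ℤ) : Prop :=
  ∀ L M N : ModuleCat.{0} A, Module.Finite A L → Module.Finite A M → Module.Finite A N →
    ∀ (f : L →ₗ[A] M) (g : M →ₗ[A] N), Function.Injective f → Function.Surjective g →
      LinearMap.range f = LinearMap.ker g → φ M = φ L + φ N

/-- `[X] = [Y]` in the Grothendieck group `K0(mod A)`: since `K0(mod A)` is free abelian
on the simple modules, this holds iff all additive `ℤ`-valued functions agree on `X`, `Y`. -/
def SameK0Class (X Y : ModuleCat.{0} A) : Prop :=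
  ∀ φ : ModuleCat.{0} A → ℤ, IsAdditiveZ A φ → φ X = φ Y

/-- Two classes of modules are numerically disjoint if they contain no nonzero `X`, `Y`
with `[X] = [Y] ≠ 0` in `K0(mod A)`. -/
def NumericallyDisjoint (C D : ModuleCat.{0} A → Prop) : Prop :=
  ¬ ∃ X Y : ModuleCat.{0} A, C X ∧ D Y ∧ Nonzero A X ∧ Nonzero A Y ∧ SameK0Class A X Y

/-- A brick: a finitely generated module whose endomorphism algebra is a division algebra,
i.e. `M` is nonzero and every nonzero endomorphism is invertible. -/
def IsBrick (M : ModuleCat.{0} A) : Prop :=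
  Module.Finite A M ∧ Nonzero A M ∧ ∀ f : M →ₗ[A] M, f ≠ 0 → Function.Bijective f

/-- A semibrick: a set of pairwise Hom-orthogonal bricks. -/
def IsSemibrick (S : Set (ModuleCat.{0} A)) : Prop :=
  (∀ M ∈ S, IsBrick A M) ∧
    ∀ M ∈ S, ∀ N ∈ S, M ≠ N → ∀ f : M →ₗ[A] N, f = 0




/-- Data identifying `K0(mod A)` with `ℤ^n`: a complete family `S` of pairwise
non-isomorphic simple modules together with the dimension-vector function `d`,
characterized by additivity on short exact sequences and `d (S i) = eᵢ`. -/
structure DimData (n : ℕ) (S : Fin n → ModuleCat.{0} A)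
    (d : ModuleCat.{0} A → (Fin n → ℤ)) : Prop where
  simple : ∀ i, IsSimpleModule A (S i)
  fin : ∀ i, Module.Finite A (S i)
  complete : ∀ M : ModuleCat.{0} A, Module.Finite A M → IsSimpleModule A M →
    ∃ i, Nonempty (M ≃ₗ[A] S i)
  distinct : ∀ i j, Nonempty ((S i) ≃ₗ[A] (S j)) → i = j
  additive : ∀ L M N : ModuleCat.{0} A, Module.Finite A L → Module.Finite A M →
    Module.Finite A N → ∀ (f : L →ₗ[A] M) (g : M →ₗ[A] N), Function.Injective f →
      Function.Surjective g → LinearMap.range f = LinearMap.ker g → d M = d L + d N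
  basis : ∀ i, d (S i) = Pi.single i 1

/-- The convex cone in `ℝ^n` generated by a set `S`. -/
def coneGen (n : ℕ) (S : Set (Fin n → ℝ)) : Set (Fin n → ℝ) :=
  { x | ∃ (m : ℕ) (c : Fin m → ℝ) (v : Fin m → (Fin n → ℝ)),
      (∀ i, 0 ≤ c i) ∧ (∀ i, v i ∈ S) ∧ x = ∑ i, c i • v i }

/-- The set of (real) dimension vectors of the modules in a class `C`. -/
def dimVecSet (n : ℕ) (d : ModuleCat.{0} A → (Fin n → ℤ)) (C : ModuleCat.{0} A → Prop) :
    Set (Fin n → ℝ) :=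
  { x | ∃ M : ModuleCat.{0} A, C M ∧ x = fun i => ((d M i : ℤ) : ℝ) }

/-- `cone C`: the convex cone generated by the dimension vectors of the modules in `C`. -/
def cone (n : ℕ) (d : ModuleCat.{0} A → (Fin n → ℤ)) (C : ModuleCat.{0} A → Prop) :
    Set (Fin n → ℝ) :=
  coneGen n (dimVecSet A n d C)

/-- A class `C` is polyhedral if `cone C` is a finitely generated (polyhedral) cone. -/
def IsPolyhedral (n : ℕ) (d : ModuleCat.{0} A → (Fin n → ℤ))
    (C : ModuleCat.{0} A → Prop) : Prop :=
  ∃ (m : ℕ) (v : Fin m → (Fin n → ℝ)), cone A n d C = coneGen n (Set.range v)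


/-- Auxiliary: `d` vanishes on subsingleton modules. -/
lemma d_subsingleton {n : ℕ} {S : Fin n → ModuleCat.{0} A}
    {d : ModuleCat.{0} A → (Fin n → ℤ)} (hd : DimData A n S d)
    (X : ModuleCat.{0} A) (h : Subsingleton X) : d X = 0 := by
  have hfin : Module.Finite A X := Module.Finite.of_surjective
    (0 : A →ₗ[A] X) (fun y => ⟨0, Subsingleton.elim _ _⟩)
  have := hd.additive X X X hfin hfin hfin LinearMap.id 0
    (fun a b _ => Subsingleton.elim a b) (fun y => ⟨0, Subsingleton.elim _ _⟩)
    (by rw [LinearMap.range_id, LinearMap.ker_zero])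
  exact left_eq_add.mp this

/-- Auxiliary: `d` is invariant under isomorphism. -/
lemma d_congr {n : ℕ} {S : Fin n → ModuleCat.{0} A}
    {d : ModuleCat.{0} A → (Fin n → ℤ)} (hd : DimData A n S d)
    (X Y : ModuleCat.{0} A) (hX : Module.Finite A X) (hY : Module.Finite A Y)
    (e : X ≃ₗ[A] Y) : d X = d Y := by
  have hz : Subsingleton (ModuleCat.of A PUnit) := inferInstanceAs (Subsingleton PUnit)
  have hfinz : Module.Finite A (ModuleCat.of A PUnit) :=
    inferInstanceAs (Module.Finite A PUnit)
  have := hd.additive X Y (ModuleCat.of A PUnit) hX hY hfinz e.toLinearMap 0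
    e.injective (fun y => ⟨0, Subsingleton.elim _ _⟩)
    (by rw [LinearMap.ker_zero, LinearMap.range_eq_top]; exact e.surjective)
  rw [this, d_subsingleton A hd _ hz, add_zero]

/-- Auxiliary: dimension vectors are componentwise nonnegative. -/
lemma d_nonneg_aux {n : ℕ} {S : Fin n → ModuleCat.{0} A}
    {d : ModuleCat.{0} A → (Fin n → ℤ)} (hd : DimData A n S d)
    (X : Type) [AddCommGroup X] [Module A X] (h : IsFiniteLength A X) :
    ∀ i, 0 ≤ d (ModuleCat.of A X) i := by
  induction h with
  | of_subsingleton =>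
    intro i
    rw [d_subsingleton A hd _ ‹Subsingleton _›]
    exact le_refl 0
  | @of_simple_quotient M _ _ N _ hN ih =>
    intro i
    have hMnoeth : IsNoetherian A M :=
      (isFiniteLength_iff_isNoetherian_isArtinian.mp (.of_simple_quotient hN)).1
    have hMfin : Module.Finite A M := ⟨IsNoetherian.noetherian ⊤⟩
    haveI : Module.Finite A N := ⟨IsNoetherian.noetherian ⊤⟩
    have hNfin : Module.Finite A (ModuleCat.of A N) :=
      inferInstanceAs (Module.Finite A N)
    have hQfin : Module.Finite A (ModuleCat.of A (M ⧸ N)) :=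
      Module.Finite.of_surjective N.mkQ N.mkQ_surjective
    have hadd := hd.additive (ModuleCat.of A N) (ModuleCat.of A M)
      (ModuleCat.of A (M ⧸ N)) hNfin hMfin hQfin N.subtype N.mkQ
      (Submodule.injective_subtype N) N.mkQ_surjective
      (by rw [Submodule.range_subtype, Submodule.ker_mkQ])
    obtain ⟨j, ⟨e⟩⟩ := hd.complete (ModuleCat.of A (M ⧸ N)) hQfin
      (inferInstanceAs (IsSimpleModule A (M ⧸ N)))
    have hQ : d (ModuleCat.of A (M ⧸ N)) = Pi.single j 1 := by
      rw [d_congr A hd (ModuleCat.of A (M ⧸ N)) (S j) hQfin (hd.fin j) e, hd.basis j]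
    have hQi : (0 : ℤ) ≤ d (ModuleCat.of A (M ⧸ N)) i := by
      rw [hQ]
      by_cases hij : i = j
      · subst hij; simp
      · rw [Pi.single_eq_of_ne hij]
    have : d (ModuleCat.of A M) i = d (ModuleCat.of A N) i
        + d (ModuleCat.of A (M ⧸ N)) i := by rw [hadd]; rfl
    rw [this]
    exact add_nonneg (ih i) hQi

/-- Auxiliary: dimension vectors of finite modules are componentwise nonnegative. -/
lemma d_nonneg {n : ℕ} {S : Fin n → ModuleCat.{0} A}
    {d : ModuleCat.{0} A → (Fin n → ℤ)} (hd : DimData A n S d)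
    (hnoeth : IsNoetherianRing A) (hart : IsArtinianRing A)
    (X : ModuleCat.{0} A) (hX : Module.Finite A X) : ∀ i, 0 ≤ d X i := by
  have hfl : IsFiniteLength A X :=
    isFiniteLength_iff_isNoetherian_isArtinian.mpr ⟨inferInstance, inferInstance⟩
  have := d_nonneg_aux A hd X hfl
  have hcongr : d (ModuleCat.of A X) = d X :=
    d_congr A hd (ModuleCat.of A X) X ‹_› hX (LinearEquiv.refl A X)
  rw [hcongr] at this
  exact this

/-- Identifying a vector `θ ∈ ℝ^n` with the stability function
`θ(M) = ⟨θ, dim M⟩`, for every `M ∈ mod A` the set `{θ ∈ ℝ^n : M ∈ T_θ}` is open. -/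
theorem stmt9 (K : Type) [Field K] [Algebra K A] [FiniteDimensional K A]
    (n : ℕ) (S : Fin n → ModuleCat.{0} A) (d : ModuleCat.{0} A → (Fin n → ℤ))
    (hd : DimData A n S d)
    (M : ModuleCat.{0} A) (hM : Module.Finite A M) :
    IsOpen {θ : Fin n → ℝ | ∀ N : ModuleCat.{0} A, Module.Finite A N →
      IsQuotientOf A N M → Nonzero A N → 0 < ∑ i, θ i * ((d N i : ℤ) : ℝ)} := by
  classical
  haveI hnr : IsNoetherianRing A := isNoetherian_of_tower K inferInstance
  haveI har : IsArtinianRing A := IsArtinianRing.of_finite K A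
  set F : Set (Fin n → ℤ) := {v | ∃ N : ModuleCat.{0} A,
    Module.Finite A N ∧ IsQuotientOf A N M ∧ Nonzero A N ∧ d N = v} with hF
  have hFsub : F ⊆ Set.Icc 0 (d M) := by
    rintro v ⟨N, hNfin, ⟨f, hf⟩, _, rfl⟩
    haveI : IsNoetherian A M := isNoetherian_of_isNoetherianRing_of_finite A M
    haveI : Module.Finite A (LinearMap.ker f) := ⟨IsNoetherian.noetherian ⊤⟩
    have hker : Module.Finite A (ModuleCat.of A (LinearMap.ker f)) :=
      inferInstanceAs (Module.Finite A (LinearMap.ker f))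
    have hadd := hd.additive (ModuleCat.of A (LinearMap.ker f)) M N hker hM hNfin
      (LinearMap.ker f).subtype f (Submodule.injective_subtype _) hf
      (Submodule.range_subtype _)
    constructor
    · intro i; exact d_nonneg A hd hnr har N hNfin i
    · intro i
      have h0 := d_nonneg A hd hnr har (ModuleCat.of A (LinearMap.ker f)) hker i
      have : d M i = d (ModuleCat.of A (LinearMap.ker f)) i + d N i := by
        rw [hadd]; rfl
      rw [this]
      exact le_add_of_nonneg_left h0
  have hFfin : F.Finite := (Set.finite_Icc _ _).subset hFsub
  have heq : {θ : Fin n → ℝ | ∀ N : ModuleCat.{0} A, Module.Finite A N →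
      IsQuotientOf A N M → Nonzero A N → 0 < ∑ i, θ i * ((d N i : ℤ) : ℝ)}
      = ⋂ v ∈ F, {θ : Fin n → ℝ | 0 < ∑ i, θ i * ((v i : ℤ) : ℝ)} := by
    ext θ
    simp only [Set.mem_setOf_eq, Set.mem_iInter]
    constructor
    · rintro h v ⟨N, h1, h2, h3, rfl⟩
      exact h N h1 h2 h3
    · intro h N h1 h2 h3
      exact h (d N) ⟨N, h1, h2, h3, rfl⟩
  rw [heq]
  refine hFfin.isOpen_biInter fun v _ => isOpen_lt continuous_const ?_
  exact continuous_finset_sum _ fun i _ => (continuous_apply i).mul continuous_const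
end TorsPaper
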